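/- Let λ_1, …, λ_d ∈ ℂ, α_1, …, α_d > 0 with α = Σα_j, t > 0, and define G(z,u) = (1/α) Σ_j α_j log|u - λ_j| + Re((z-u)²/(2t)). Then for fixed z, writing u = x + iy, the function x ↦ G(z, x + iy) is strictly convex on ℝ whenever |y| > 2·max(√t, |λ_1|, …, |λ_d|); specifically its second derivative in x is bounded below by 1/t − 4/y² > 0. -/

import Mathlib

/-!
On the line `Im u = y` one has `log |u - λ| = ½ log ((x - Re λ)² + s)` with
`s = (y - Im λ)² > y²/4`, and the second `x`-derivative `(s - w²)/(w² + s)²` of this term is at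
least `-1/s > -4/y²`. Averaging with the weights `α_j/α` and adding the `1/t` coming from
`Re ((z - u)²/(2t))` gives `∂²ₓ G ≥ 1/t - 4/y²`, which is positive because `y² > 4t`.
-/

/-- `G(z,u) = (1/α) Σ_j α_j log|u - λ_j| + Re((z-u)²/(2t))`. -/
noncomputable def Gfun (d : ℕ) (lam : Fin d → ℂ) (a : Fin d → ℝ) (A : ℝ) (t : ℝ)
    (z u : ℂ) : ℝ :=
  (1 / A) * ∑ j, a j * Real.log ‖u - lam j‖
    + ((z - u) ^ 2 / (2 * (t : ℂ))).re

open Real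

lemma iteratedDeriv_two_eq_of_hasDerivAt {f f' f'' : ℝ → ℝ}
    (hf : ∀ x, HasDerivAt f (f' x) x) (hf' : ∀ x, HasDerivAt f' (f'' x) x) :
    iteratedDeriv 2 f = f'' := by
  have hderiv : deriv f = f' := funext fun x => (hf x).deriv
  ext x
  rw [iteratedDeriv_eq_iterate, Function.iterate_succ_apply', Function.iterate_one, hderiv,
    (hf' x).deriv]

lemma strictConvexOn_univ_of_iteratedDeriv_two_pos {f : ℝ → ℝ} (hf : Continuous f)
    (hf'' : ∀ x, 0 < iteratedDeriv 2 f x) : StrictConvexOn ℝ Set.univ f :=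
  strictConvexOn_univ_of_deriv2_pos hf fun x => by
    simpa only [iteratedDeriv_eq_iterate] using hf'' x

lemma hasDerivAt_sub_sq_add (b s x : ℝ) :
    HasDerivAt (fun x => (x - b) ^ 2 + s) (2 * (x - b)) x := by
  refine (((hasDerivAt_id' x).sub_const b).fun_pow 2 |>.add_const s).congr_deriv ?_
  norm_num

lemma hasDerivAt_log_sub_sq_add_div_two {b s : ℝ} (hs : 0 < s) (x : ℝ) :
    HasDerivAt (fun x => log ((x - b) ^ 2 + s) / 2) ((x - b) / ((x - b) ^ 2 + s)) x := by
  have hpos : 0 < (x - b) ^ 2 + s := by positivity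
  refine (((hasDerivAt_sub_sq_add b s x).log hpos.ne').div_const 2).congr_deriv ?_
  field_simp

lemma hasDerivAt_sub_div_sub_sq_add {b s : ℝ} (hs : 0 < s) (x : ℝ) :
    HasDerivAt (fun x => (x - b) / ((x - b) ^ 2 + s))
      ((s - (x - b) ^ 2) / ((x - b) ^ 2 + s) ^ 2) x := by
  have hpos : 0 < (x - b) ^ 2 + s := by positivity
  refine (((hasDerivAt_id' x).sub_const b).fun_div (hasDerivAt_sub_sq_add b s x)
    hpos.ne').congr_deriv ?_
  ring

lemma neg_inv_le_sub_div_sq_add {s : ℝ} (hs : 0 < s) (w : ℝ) :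
    -s⁻¹ ≤ (s - w ^ 2) / (w ^ 2 + s) ^ 2 := by
  rw [neg_le, ← neg_div, neg_sub, div_le_iff₀ (by positivity)]
  field_simp
  nlinarith [sq_nonneg w, sq_nonneg (w ^ 2)]

lemma le_inv_mul_sum_mul {ι : Type*} (s : Finset ι) {a g : ι → ℝ} {m : ℝ}
    (ha : ∀ j ∈ s, 0 ≤ a j) (hm : m ≤ 0) (hg : ∀ j ∈ s, m ≤ g j) :
    m ≤ (∑ j ∈ s, a j)⁻¹ * ∑ j ∈ s, a j * g j := by
  -- `hm` handles zero total weight, where the inverse is the junk value `0`.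
  rcases (Finset.sum_nonneg ha).eq_or_lt with hA | hA
  · rw [← hA, inv_zero, zero_mul]
    exact hm
  · rw [le_inv_mul_iff₀ hA, Finset.sum_mul]
    exact Finset.sum_le_sum fun j hj => mul_le_mul_of_nonneg_left (hg j hj) (ha j hj)

lemma sq_div_four_lt_sq_sub_im {w : ℂ} {y : ℝ} (h : 2 * ‖w‖ < |y|) :
    y ^ 2 / 4 < (y - w.im) ^ 2 := by
  have him : |w.im| < |y| / 2 := by linarith [Complex.abs_im_le_norm w]
  have hdist : |y| / 2 < |y - w.im| := by linarith [abs_sub_abs_le_abs_sub y w.im]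
  calc y ^ 2 / 4 = (|y| / 2) ^ 2 := by rw [div_pow, sq_abs]; norm_num
    _ < |y - w.im| ^ 2 := by gcongr
    _ = (y - w.im) ^ 2 := sq_abs _

lemma four_div_sq_lt_one_div {t y : ℝ} (ht : 0 < t) (h : 2 * √t < |y|) :
    4 / y ^ 2 < 1 / t := by
  have h4t : 4 * t < y ^ 2 := by
    calc 4 * t = (2 * √t) ^ 2 := by rw [mul_pow, sq_sqrt ht.le]; norm_num
      _ < |y| ^ 2 := by gcongr
      _ = y ^ 2 := sq_abs y
  rw [div_lt_div_iff₀ ((by positivity : (0 : ℝ) < 4 * t).trans h4t) ht]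
  linarith

section Horizontal

variable {d : ℕ} (lam : Fin d → ℂ) (a : Fin d → ℝ) (A t : ℝ) (z : ℂ) (y : ℝ)

noncomputable def GfunDx (x : ℝ) : ℝ :=
  (1 / A) * ∑ j, a j * ((x - (lam j).re) / ((x - (lam j).re) ^ 2 + (y - (lam j).im) ^ 2))
    + (x - z.re) / t

noncomputable def GfunDxx (x : ℝ) : ℝ :=
  (1 / A) * ∑ j, a j * (((y - (lam j).im) ^ 2 - (x - (lam j).re) ^ 2)
      / ((x - (lam j).re) ^ 2 + (y - (lam j).im) ^ 2) ^ 2)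
    + 1 / t

lemma Gfun_ofReal_add_mul_I (x : ℝ) :
    Gfun d lam a A t z (x + y * Complex.I) =
      (1 / A) * ∑ j, a j * (log ((x - (lam j).re) ^ 2 + (y - (lam j).im) ^ 2) / 2)
        + ((z.re - x) ^ 2 - (z.im - y) ^ 2) / (2 * t) := by
  have hlog : ∀ j, log ‖(x : ℂ) + y * Complex.I - lam j‖
      = log ((x - (lam j).re) ^ 2 + (y - (lam j).im) ^ 2) / 2 := fun j => by
    rw [Complex.norm_def, log_sqrt (Complex.normSq_nonneg _), Complex.normSq_apply]
    simp only [Complex.sub_re, Complex.add_re, Complex.ofReal_re, Complex.mul_re,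
      Complex.I_re, Complex.I_im, Complex.ofReal_im, Complex.sub_im, Complex.add_im,
      Complex.mul_im]
    ring_nf
  have hquad : ((z - ((x : ℂ) + y * Complex.I)) ^ 2 / (2 * (t : ℂ))).re
      = ((z.re - x) ^ 2 - (z.im - y) ^ 2) / (2 * t) := by
    rw [show (2 * (t : ℂ)) = ((2 * t : ℝ) : ℂ) by push_cast; rfl, Complex.div_ofReal_re]
    simp [sq]
  simp only [Gfun, hlog, hquad]

variable {lam y}

lemma hasDerivAt_Gfun_horizontal (hy : ∀ j, (lam j).im ≠ y) (x : ℝ) :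
    HasDerivAt (fun x : ℝ => Gfun d lam a A t z (x + y * Complex.I))
      (GfunDx lam a A t z y x) x := by
  simp only [Gfun_ofReal_add_mul_I, GfunDx]
  have hlog := HasDerivAt.fun_sum (u := Finset.univ) fun j _ =>
    (hasDerivAt_log_sub_sq_add_div_two (b := (lam j).re)
      (pow_two_pos_of_ne_zero (sub_ne_zero.2 (hy j).symm)) x).const_mul (a j)
  refine (hlog.const_mul (1 / A)).add ?_
  have hquad := (((hasDerivAt_id' x).const_sub z.re).fun_pow 2).sub_const
    ((z.im - y) ^ 2) |>.div_const (2 * t)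
  refine hquad.congr_deriv ?_
  field_simp
  ring

lemma hasDerivAt_GfunDx (hy : ∀ j, (lam j).im ≠ y) (x : ℝ) :
    HasDerivAt (GfunDx lam a A t z y) (GfunDxx lam a A t y x) x := by
  have hfrac := HasDerivAt.fun_sum (u := Finset.univ) fun j _ =>
    (hasDerivAt_sub_div_sub_sq_add (b := (lam j).re)
      (pow_two_pos_of_ne_zero (sub_ne_zero.2 (hy j).symm)) x).const_mul (a j)
  refine (hfrac.const_mul (1 / A)).add ?_
  simpa using ((hasDerivAt_id' x).sub_const z.re).div_const t

lemma iteratedDeriv_two_Gfun_horizontal (hy : ∀ j, (lam j).im ≠ y) :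
    iteratedDeriv 2 (fun x : ℝ => Gfun d lam a A t z (x + y * Complex.I))
      = GfunDxx lam a A t y :=
  iteratedDeriv_two_eq_of_hasDerivAt (hasDerivAt_Gfun_horizontal a A t z hy)
    (hasDerivAt_GfunDx a A t z hy)

variable {a A}

lemma one_div_sub_one_div_le_GfunDxx {r : ℝ} (hr : 0 < r) (ha : ∀ j, 0 ≤ a j)
    (hA : A = ∑ j, a j) (hry : ∀ j, r ≤ (y - (lam j).im) ^ 2) (x : ℝ) :
    1 / t - 1 / r ≤ GfunDxx lam a A t y x := by
  have hterm : ∀ j ∈ Finset.univ, -(1 / r) ≤ ((y - (lam j).im) ^ 2 - (x - (lam j).re) ^ 2)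
      / ((x - (lam j).re) ^ 2 + (y - (lam j).im) ^ 2) ^ 2 := fun j _ => by
    have hs := hr.trans_le (hry j)
    calc -(1 / r) ≤ -((y - (lam j).im) ^ 2)⁻¹ := by
          rw [one_div, neg_le_neg_iff]; exact inv_anti₀ hr (hry j)
      _ ≤ _ := neg_inv_le_sub_div_sq_add hs _
  have havg := le_inv_mul_sum_mul Finset.univ (fun j _ => ha j)
    (neg_nonpos.2 (one_div_pos.2 hr).le) hterm
  rw [GfunDxx, hA, one_div (∑ j, a j)]
  linarith

end Horizontal

/-- For fixed `z`, writing `u = x + iy`, the function `x ↦ G(z, x + iy)` is strictly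
convex on `ℝ` whenever `|y| > 2·max(√t, |λ_1|, …, |λ_d|)`; its second derivative in
`x` is bounded below by `1/t − 4/y² > 0`. -/
theorem G_strictly_convex_horizontal
    (d : ℕ) (lam : Fin d → ℂ) (a : Fin d → ℝ) (hpos : ∀ j, 0 < a j)
    (A : ℝ) (hA : A = ∑ j, a j) (t : ℝ) (ht : 0 < t) (z : ℂ) (y : ℝ)
    (hy1 : 2 * Real.sqrt t < |y|) (hy2 : ∀ j, 2 * ‖lam j‖ < |y|) :
    StrictConvexOn ℝ Set.univ
        (fun x : ℝ => Gfun d lam a A t z (x + y * Complex.I))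
    ∧ (∀ x : ℝ, 1 / t - 4 / y ^ 2 ≤
        iteratedDeriv 2 (fun x : ℝ => Gfun d lam a A t z (x + y * Complex.I)) x)
    ∧ 0 < 1 / t - 4 / y ^ 2 := by
  have hsep : ∀ j, y ^ 2 / 4 < (y - (lam j).im) ^ 2 := fun j => sq_div_four_lt_sq_sub_im (hy2 j)
  have hy : ∀ j, (lam j).im ≠ y := fun j him => by
    have := hsep j
    rw [him, sub_self] at this
    nlinarith [sq_nonneg y]
  have hgap : 0 < 1 / t - 4 / y ^ 2 := sub_pos.2 (four_div_sq_lt_one_div ht hy1)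
  have hbound : ∀ x, 1 / t - 4 / y ^ 2 ≤
      iteratedDeriv 2 (fun x : ℝ => Gfun d lam a A t z (x + y * Complex.I)) x := by
    intro x
    rw [iteratedDeriv_two_Gfun_horizontal a A t z hy]
    have hy0 : 0 < y ^ 2 / 4 := by
      have := abs_pos.1 ((by positivity : (0 : ℝ) ≤ 2 * √t).trans_lt hy1)
      positivity
    simpa only [one_div_div] using one_div_sub_one_div_le_GfunDxx t hy0
      (fun j => (hpos j).le) hA (fun j => (hsep j).le) x
  have hcont : Continuous (fun x : ℝ => Gfun d lam a A t z (x + y * Complex.I)) :=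
    continuous_iff_continuousAt.2 fun x => (hasDerivAt_Gfun_horizontal a A t z hy x).continuousAt
  exact ⟨strictConvexOn_univ_of_iteratedDeriv_two_pos hcont fun x => hgap.trans_le (hbound x),
    hbound, hgap⟩
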